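/- Let Z be standard normal and c > 0. Then E[min{1, exp(c Z − c²/2)}] = Φ(−c/2) + Φ(−c/2) = 2Φ(−c/2). -/

import Mathlib

open Real MeasureTheory

/-- The standard normal density `φ`. -/
noncomputable def stdNormalPDF (u : ℝ) : ℝ :=
  (Real.sqrt (2 * Real.pi))⁻¹ * Real.exp (-u ^ 2 / 2)

/-- The standard normal CDF `Φ`. -/
noncomputable def stdNormalCDF (t : ℝ) : ℝ :=
  ∫ u in Set.Iic t, stdNormalPDF u

/-!
Completing the square gives `exp (c z - c²/2) φ(z) = φ(z - c)`, and the minimum picks the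
exponential exactly when `z ≤ c/2`. Splitting the integral at `c/2`, the left part is
`∫_{-∞}^{c/2} φ(z - c) dz = Φ(-c/2)` and the right part is `∫_{c/2}^{∞} φ = Φ(-c/2)` by
symmetry of `φ`.
-/

open Set

theorem setIntegral_Iic_comp_sub_right {E : Type*} [NormedAddCommGroup E] [NormedSpace ℝ E]
    (f : ℝ → E) (a d : ℝ) : ∫ x in Iic a, f (x - d) = ∫ x in Iic (a - d), f x := by
  have h := (measurePreserving_sub_right volume d).setIntegral_preimage_emb
    (measurableEmbedding_subRight d) f (Iic (a - d))
  rw [← h]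
  congr 1
  ext x
  simp

theorem stdNormalPDF_neg (u : ℝ) : stdNormalPDF (-u) = stdNormalPDF u := by
  simp [stdNormalPDF]

theorem integrable_stdNormalPDF : Integrable stdNormalPDF := by
  refine ((integrable_exp_neg_mul_sq (b := 1 / 2) (by norm_num)).const_mul
    (Real.sqrt (2 * π))⁻¹).congr (Filter.Eventually.of_forall fun u => ?_)
  simp only [stdNormalPDF]
  ring_nf

theorem exp_mul_sub_sq_div_two_mul_stdNormalPDF (c z : ℝ) :
    exp (c * z - c ^ 2 / 2) * stdNormalPDF z = stdNormalPDF (z - c) := by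
  simp only [stdNormalPDF]
  rw [mul_left_comm, ← exp_add]
  ring_nf

theorem setIntegral_Iic_stdNormalPDF_sub (a c : ℝ) :
    ∫ z in Iic a, stdNormalPDF (z - c) = stdNormalCDF (a - c) :=
  setIntegral_Iic_comp_sub_right stdNormalPDF a c

theorem setIntegral_Ioi_stdNormalPDF (a : ℝ) :
    ∫ z in Ioi a, stdNormalPDF z = stdNormalCDF (-a) := by
  simp only [stdNormalCDF, ← integral_comp_neg_Ioi, stdNormalPDF_neg]

section acceptance

variable {c z : ℝ}

theorem min_one_exp_mul_stdNormalPDF_of_le (hc : 0 ≤ c) (hz : z ≤ c / 2) :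
    min 1 (exp (c * z - c ^ 2 / 2)) * stdNormalPDF z = stdNormalPDF (z - c) := by
  have hexp : exp (c * z - c ^ 2 / 2) ≤ 1 := exp_le_one_iff.mpr (by nlinarith)
  rw [min_eq_right hexp, exp_mul_sub_sq_div_two_mul_stdNormalPDF]

theorem min_one_exp_mul_stdNormalPDF_of_lt (hc : 0 ≤ c) (hz : c / 2 < z) :
    min 1 (exp (c * z - c ^ 2 / 2)) * stdNormalPDF z = stdNormalPDF z := by
  have hexp : 1 ≤ exp (c * z - c ^ 2 / 2) := one_le_exp_iff.mpr (by nlinarith)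
  rw [min_eq_left hexp, one_mul]

end acceptance

/-- For `Z` standard normal and `c > 0`, `E[min{1, exp(cZ − c²/2)}] = 2Φ(−c/2)`. -/
theorem min_exp_acceptance (c : ℝ) (hc : 0 < c) :
    (∫ z : ℝ, min 1 (Real.exp (c * z - c ^ 2 / 2)) * stdNormalPDF z)
      = 2 * stdNormalCDF (-c / 2) := by
  have hleft : EqOn (fun z => min 1 (exp (c * z - c ^ 2 / 2)) * stdNormalPDF z)
      (fun z => stdNormalPDF (z - c)) (Iic (c / 2)) :=
    fun _ hz => min_one_exp_mul_stdNormalPDF_of_le hc.le hz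
  have hright : EqOn (fun z => min 1 (exp (c * z - c ^ 2 / 2)) * stdNormalPDF z)
      stdNormalPDF (Ioi (c / 2)) :=
    fun _ hz => min_one_exp_mul_stdNormalPDF_of_lt hc.le hz
  rw [← intervalIntegral.integral_Iic_add_Ioi
      ((integrable_stdNormalPDF.comp_sub_right c).integrableOn.congr_fun hleft.symm
        measurableSet_Iic)
      (integrable_stdNormalPDF.integrableOn.congr_fun hright.symm measurableSet_Ioi),
    setIntegral_congr_fun measurableSet_Iic hleft, setIntegral_congr_fun measurableSet_Ioi hright,
    setIntegral_Iic_stdNormalPDF_sub, setIntegral_Ioi_stdNormalPDF,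
    show c / 2 - c = -c / 2 by ring, neg_div, two_mul]
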